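/- arXiv:0807.3283 — 2 statements merged into one kernel-verified Lean document; each statement's English description precedes it below -/
import Mathlib

section
/- Let ι: Z ↪ X be a regular closed immersion of codimension c ≥ 2 of separated connected noetherian schemes, π: Bl → X the blow-up of X along Z, E the exceptional fiber, and υ: U = X − Z ↪ X the open complement, with tilde-υ: U ↪ Bl. Assume there is a morphism tilde-α: Bl → Y such that α := tilde-α ∘ tilde-υ: U → Y is an A*-bundle, and assume X, Y, Z are regular. Let H* be a cohomology theory with supports admitting a localization long exact sequence ⋯ → H*_Z(X) → H*(X) →(υ*) H*(U) →(∂) H^{*+1}_Z(X) → ⋯, which is homotopy invariant for regular schemes and oriented, i.e. admits push-forwards along proper morphisms satisfying flat base-change. Then υ*: H*(X) → H*(U) is split surjective with explicit section π_* ∘ tilde-α* ∘ (α*)^{-1}, hence the connecting homomorphism ∂: H*(U) → H^{*+1}_Z(X) vanishes and the localization long exact sequence reduces to split short exact sequences 0 → H*_Z(X) → H*(X) → H*(U) → 0. -/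
/-!
STATEMENT 0 (Balmer–Calmès, "the oriented technique", Theorem 1.3).

Setup: `ι : Z ↪ X` is a regular closed immersion of codimension `c ≥ 2` of
separated connected noetherian `ℤ[1/2]`-schemes, `π : Bl → X` is the blow-up of
`X` along `Z` with exceptional fiber `E`, `υ : U = X − Z ↪ X` is the open
complement and `tildeυ : U ↪ Bl`.  One assumes given `tildeα : Bl → Y` such
that `α := tildeα ∘ tildeυ : U → Y` is an `𝔸*`-bundle, and that `X`, `Y`, `Z`
are regular.  `H^*` is a cohomology theory with supports, with a localization
long exact sequence, homotopy invariant for regular schemes and oriented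
(push-forwards along proper morphisms, satisfying flat base-change).

The structure below records the values of such a theory on this geometric
situation: `HZX i = H^i_Z(X)`, `HX i = H^i(X)`, `HU i = H^i(U)`,
`HY i = H^i(Y)`, `HBl i = H^i(Bl)`, together with exactly the axioms listed in
the statement: the localization long exact sequence, functoriality of
pull-backs along `α = tildeα ∘ tildeυ`, homotopy invariance (`α^*` is an
isomorphism, `α` being an `𝔸*`-bundle over the regular scheme `Y`), the
push-forward `π_*` along the proper morphism `π` and flat base-change
`υ^* ∘ π_* = tildeυ^*` for the cartesian square formed by `π` and `υ`.
-/

/-- The blow-up setup of the paper, together with an oriented homotopy-invariant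
cohomology theory with supports evaluated on it. -/
structure OrientedBlowupSetup where
  /-- the codimension of `Z` in `X` -/
  c : ℕ
  /-- `c ≥ 2` -/
  two_le_c : 2 ≤ c
  /-- `H^i_Z(X)`, cohomology of `X` with supports in `Z` -/
  HZX : ℤ → Type*
  /-- `H^i(X)` -/
  HX : ℤ → Type*
  /-- `H^i(U)`, `U = X − Z` -/
  HU : ℤ → Type*
  /-- `H^i(Y)` -/
  HY : ℤ → Type*
  /-- `H^i(Bl)`, `Bl = Bl_Z X` -/
  HBl : ℤ → Type*
  [abZX : ∀ i, AddCommGroup (HZX i)]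
  [abX : ∀ i, AddCommGroup (HX i)]
  [abU : ∀ i, AddCommGroup (HU i)]
  [abY : ∀ i, AddCommGroup (HY i)]
  [abBl : ∀ i, AddCommGroup (HBl i)]
  /-- extension of supports `H^i_Z(X) → H^i(X)` -/
  ext : ∀ i, HZX i →+ HX i
  /-- restriction `υ^* : H^i(X) → H^i(U)` -/
  res : ∀ i, HX i →+ HU i
  /-- connecting homomorphism `∂ : H^i(U) → H^{i+1}_Z(X)` -/
  conn : ∀ i, HU i →+ HZX (i + 1)
  /-- localization long exact sequence, exactness at `H^i(X)` -/
  lex₁ : ∀ i, Function.Exact ⇑(ext i) ⇑(res i)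
  /-- localization long exact sequence, exactness at `H^i(U)` -/
  lex₂ : ∀ i, Function.Exact ⇑(res i) ⇑(conn i)
  /-- localization long exact sequence, exactness at `H^{i+1}_Z(X)` -/
  lex₃ : ∀ i, Function.Exact ⇑(conn i) ⇑(ext (i + 1))
  /-- pull-back `tildeα^* : H^i(Y) → H^i(Bl)` -/
  tildeαPull : ∀ i, HY i →+ HBl i
  /-- pull-back `tildeυ^* : H^i(Bl) → H^i(U)` -/
  tildeυPull : ∀ i, HBl i →+ HU i
  /-- pull-back `α^* : H^i(Y) → H^i(U)` -/
  αPull : ∀ i, HY i →+ HU i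
  /-- functoriality of pull-backs for `α = tildeα ∘ tildeυ` -/
  pull_comp : ∀ i, (tildeυPull i).comp (tildeαPull i) = αPull i
  /-- homotopy invariance: `α^*` is an isomorphism since `α : U → Y` is an
  `𝔸*`-bundle over the regular scheme `Y` -/
  htpy : ∀ i, Function.Bijective (αPull i)
  /-- push-forward `π_* : H^i(Bl) → H^i(X)` along the proper morphism `π` -/
  πPush : ∀ i, HBl i →+ HX i
  /-- flat base-change `υ^* ∘ π_* = tildeυ^*` -/
  base_change : ∀ i, (res i).comp (πPush i) = tildeυPull i

attribute [instance] OrientedBlowupSetup.abZX OrientedBlowupSetup.abX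
  OrientedBlowupSetup.abU OrientedBlowupSetup.abY OrientedBlowupSetup.abBl

/-!
Flat base-change and functoriality of pull-backs give `υ^* ∘ π_* ∘ tildeα^* = α^*`, an
isomorphism by homotopy invariance, so `π_* ∘ tildeα^* ∘ (α^*)⁻¹` is a section of `υ^*`.
Surjectivity of `υ^*` then kills `∂` and, by exactness one step further, makes the extension
of supports injective.
-/

namespace Function.Exact

variable {M N P : Type*} [AddGroup M] [AddGroup N] [AddGroup P] {f : M →+ N} {g : N →+ P}

theorem addMonoidHom_eq_zero_of_surjective (h : Exact f g) (hf : Surjective f) : g = 0 :=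
  (AddMonoidHom.cancel_right hf).mp (by rw [h.addMonoidHom_comp_eq_zero, AddMonoidHom.zero_comp])

theorem injective_of_addMonoidHom_eq_zero (h : Exact f g) (hf : f = 0) : Injective g := by
  rw [← AddMonoidHom.ker_eq_bot_iff, h.addMonoidHom_ker_eq, hf, AddMonoidHom.range_zero]

end Function.Exact

theorem AddMonoidHom.comp_comp_symm_eq_id_of_comp_eq {X Y U : Type*} [AddZeroClass X]
    [AddZeroClass Y] [AddZeroClass U] {r : X →+ U} {q : Y →+ X} {e : Y ≃+ U}
    (h : r.comp q = e) : r.comp (q.comp e.symm) = AddMonoidHom.id U := by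
  ext x
  simpa using DFunLike.congr_fun h (e.symm x)

namespace OrientedBlowupSetup

variable (S : OrientedBlowupSetup) (i : ℤ)

theorem res_comp_πPush_comp_tildeαPull :
    (S.res i).comp ((S.πPush i).comp (S.tildeαPull i)) = S.αPull i := by
  rw [← AddMonoidHom.comp_assoc, S.base_change, S.pull_comp]

theorem res_comp_section :
    (S.res i).comp ((S.πPush i).comp ((S.tildeαPull i).comp
        (AddEquiv.ofBijective (S.αPull i) (S.htpy i)).symm.toAddMonoidHom))
      = AddMonoidHom.id (S.HU i) :=
  AddMonoidHom.comp_comp_symm_eq_id_of_comp_eq (e := AddEquiv.ofBijective (S.αPull i) (S.htpy i))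
    (S.res_comp_πPush_comp_tildeαPull i)

theorem res_surjective : Function.Surjective (S.res i) :=
  fun x => ⟨_, DFunLike.congr_fun (S.res_comp_section i) x⟩

theorem conn_eq_zero : S.conn i = 0 :=
  (S.lex₂ i).addMonoidHom_eq_zero_of_surjective (S.res_surjective i)

theorem ext_injective : Function.Injective (S.ext i) := by
  obtain ⟨j, rfl⟩ : ∃ j, i = j + 1 := ⟨i - 1, (sub_add_cancel i 1).symm⟩
  exact (S.lex₃ j).injective_of_addMonoidHom_eq_zero (S.conn_eq_zero j)

end OrientedBlowupSetup

/-- **The oriented technique** (Theorem 1.3).  In the above setup, the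
restriction `υ^* : H^*(X) → H^*(U)` is split surjective with explicit section
`π_* ∘ tildeα^* ∘ (α^*)⁻¹`, the connecting homomorphism
`∂ : H^*(U) → H^{*+1}_Z(X)` vanishes, and the localization long exact sequence
reduces to (split) short exact sequences `0 → H^*_Z(X) → H^*(X) → H^*(U) → 0`. -/
theorem oriented_technique (S : OrientedBlowupSetup) (i : ℤ) :
    (S.res i).comp ((S.πPush i).comp ((S.tildeαPull i).comp
        (AddEquiv.ofBijective (S.αPull i) (S.htpy i)).symm.toAddMonoidHom))
      = AddMonoidHom.id (S.HU i) ∧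
    S.conn i = 0 ∧
    Function.Injective ⇑(S.ext i) ∧
    Function.Exact ⇑(S.ext i) ⇑(S.res i) ∧
    Function.Surjective ⇑(S.res i) :=
  ⟨S.res_comp_section i, S.conn_eq_zero i, S.ext_injective i, S.lex₁ i, S.res_surjective i⟩
end

section
/- Let ι: Z ↪ X be a regular closed immersion of codimension c ≥ 2 of separated connected noetherian Z[1/2]-schemes, π: Bl → X the blow-up along Z, υ: U = X − Z ↪ X, tilde-υ: U ↪ Bl. Assume there is tilde-α: Bl → Y with α := tilde-α ∘ tilde-υ: U → Y an A*-bundle, and X, Y, Z regular. Let L ∈ Pic(X) and let λ(L) ∈ Z be defined by tilde-α*(α*)^{-1}υ*(L) = π*(L) ⊗ O(E)^{⊗λ(L)} in Pic(Bl). If λ(L) ≡ c−1 mod 2, then the restriction υ*: W*(X, L) → W*(U, L|_U) is split surjective, with explicit section the composition π_* ∘ tilde-α* ∘ (α*)^{-1}: W*(U, L|_U) → W*(Y, (α*)^{-1}L|_U) → W*(Bl, ω_π ⊗ π*L) → W*(X, L). Consequently the connecting homomorphism ∂: W*(U, L|_U) → W^{*+1}_Z(X, L) vanishes and the localization long exact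 sequence reduces to split short exact sequences 0 → W*_Z(X, L) → W*(X, L) → W*(U, L|_U) → 0. -/
/-!
STATEMENT 2 (Balmer–Calmès, Theorem 2.2).

Setup: `ι : Z ↪ X` is a regular closed immersion of codimension `c ≥ 2` of
separated connected noetherian `ℤ[1/2]`-schemes, `π : Bl → X` the blow-up
along `Z`, `υ : U = X − Z ↪ X`, `tildeυ : U ↪ Bl`; one is given
`tildeα : Bl → Y` with `α := tildeα ∘ tildeυ : U → Y` an `𝔸*`-bundle, and
`X`, `Y`, `Z` are regular.

Via homotopy invariance of Picard groups, `Pic(Y) ≅ Pic(U) ≅ Pic(X)`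
(`c ≥ 2`), and `Pic(Bl) ≅ Pic(X) ⊕ ℤ·[O(E)]` where `O(E) = O_Bl(−1)`.  For
`L ∈ Pic(X)`, the integer `λ(L)` is defined by
`tildeα^*(α^*)⁻¹υ^*(L) = π^*(L) ⊗ O(E)^{⊗λ(L)}` in `Pic(Bl)`.

The structure records the twisted derived Witt groups
`WX i L = W^i(X, L)`, `WU i L = W^i(U, L|_U)`, `WY i L = W^i(Y, (α^*)⁻¹L|_U)`,
`WZX i L = W^i_Z(X, L)` (supports in `Z`) and
`WBl i L k = W^i(Bl, π^*L ⊗ O(E)^{⊗k})`, with the localization long exact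
sequence, pull-backs, square-periodicity, homotopy invariance of Witt groups
(`α^*` bijective), the push-forward `π_* : W^i(Bl, ω_π ⊗ π^*L) → W^i(X, L)`
(`ω_π = O(E)^{⊗(c−1)}`, of trivial restriction to `U`) and flat base-change.
-/

/-- The setup of Theorem 2.2. -/
structure WittBlowupSetup where
  /-- the codimension of `Z` in `X` -/
  c : ℕ
  two_le_c : 2 ≤ c
  /-- `Pic(X) ≅ Pic(U) ≅ Pic(Y)` -/
  PicX : Type*
  [picX : AddCommGroup PicX]
  /-- `λ : Pic(X) → ℤ`, defined by `tildeα^*(α^*)⁻¹υ^*(L) = π^*L ⊗ O(E)^{⊗λ(L)}`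
  in `Pic(Bl) = Pic(X) ⊕ ℤ·[O(E)]` -/
  lam : PicX → ℤ
  /-- `W^i(X, L)` -/
  WX : ℤ → PicX → Type*
  /-- `W^i(U, L|_U)` -/
  WU : ℤ → PicX → Type*
  /-- `W^i(Y, (α^*)⁻¹(L|_U))` -/
  WY : ℤ → PicX → Type*
  /-- `W^i_Z(X, L)`, Witt groups with supports in `Z` -/
  WZX : ℤ → PicX → Type*
  /-- `W^i(Bl, π^*L ⊗ O(E)^{⊗k})` -/
  WBl : ℤ → PicX → ℤ → Type*
  [wx : ∀ i L, AddCommGroup (WX i L)]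
  [wu : ∀ i L, AddCommGroup (WU i L)]
  [wy : ∀ i L, AddCommGroup (WY i L)]
  [wzx : ∀ i L, AddCommGroup (WZX i L)]
  [wbl : ∀ i L k, AddCommGroup (WBl i L k)]
  /-- extension of supports `W^i_Z(X, L) → W^i(X, L)` -/
  ext : ∀ i L, WZX i L →+ WX i L
  /-- restriction `υ^* : W^i(X, L) → W^i(U, L|_U)` -/
  res : ∀ i L, WX i L →+ WU i L
  /-- connecting homomorphism `∂ : W^i(U, L|_U) → W^{i+1}_Z(X, L)` -/
  conn : ∀ i L, WU i L →+ WZX (i + 1) L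
  /-- localization long exact sequence -/
  lex₁ : ∀ i L, Function.Exact ⇑(ext i L) ⇑(res i L)
  lex₂ : ∀ i L, Function.Exact ⇑(res i L) ⇑(conn i L)
  lex₃ : ∀ i L, Function.Exact ⇑(conn i L) ⇑(ext (i + 1) L)
  /-- pull-back `α^* : W^i(Y, (α^*)⁻¹L|_U) → W^i(U, L|_U)` -/
  αPull : ∀ i L, WY i L →+ WU i L
  /-- homotopy invariance: `α^*` is an isomorphism for the `𝔸*`-bundle `α` over
  the regular scheme `Y` -/
  αPull_bij : ∀ i L, Function.Bijective (αPull i L)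
  /-- pull-back `tildeα^* : W^i(Y, (α^*)⁻¹L|_U) → W^i(Bl, tildeα^*(α^*)⁻¹υ^*L)`,
  with `tildeα^*(α^*)⁻¹υ^*(L) = (L, λ(L))` in `Pic(Bl)` -/
  tildeαPull : ∀ i L, WY i L →+ WBl i L (lam L)
  /-- pull-back `tildeυ^* : W^i(Bl, π^*L ⊗ O(E)^{⊗k}) → W^i(U, L|_U)`
  (`O(E)|_U` is trivial) -/
  tildeυPull : ∀ i L k, WBl i L k →+ WU i L
  /-- functoriality: `tildeυ^* ∘ tildeα^* = α^*` -/
  pull_comp : ∀ i L, (tildeυPull i L (lam L)).comp (tildeαPull i L) = αPull i L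
  /-- square-periodicity in the `O(E)`-direction -/
  perBl : ∀ (i : ℤ) (L : PicX) (k k' : ℤ), k ≡ k' [ZMOD 2] → (WBl i L k ≃+ WBl i L k')
  /-- square-periodicity is compatible with restriction to `U`, where `O(E)` is
  canonically trivial -/
  per_res : ∀ (i : ℤ) (L : PicX) (k k' : ℤ) (h : k ≡ k' [ZMOD 2]),
    (tildeυPull i L k').comp (perBl i L k k' h).toAddMonoidHom = tildeυPull i L k
  /-- push-forward `π_* : W^i(Bl, ω_π ⊗ π^*L) → W^i(X, L)` along the proper
  birational `π`, with `ω_π ⊗ π^*L = (L, c−1)` in `Pic(Bl)` -/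
  πPush : ∀ (i : ℤ) (L : PicX), WBl i L ((c : ℤ) - 1) →+ WX i L
  /-- flat base-change: `υ^* ∘ π_* = tildeυ^*` (using `ω_π|_U = O_U`) -/
  base_change : ∀ i L, (res i L).comp (πPush i L) = tildeυPull i L ((c : ℤ) - 1)

attribute [instance] WittBlowupSetup.picX WittBlowupSetup.wx WittBlowupSetup.wu
  WittBlowupSetup.wy WittBlowupSetup.wzx WittBlowupSetup.wbl

/-!
Away from `Z` the blow-up is an isomorphism, so restricting `π_*` to `U` is `tildeυ^*` (flat
base change), and `tildeυ^* ∘ tildeα^* = α^*`. The parity hypothesis on `λ(L)` is exactly what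
lets square-periodicity move `tildeα^*` into the twist `ω_π ⊗ π^*L` on which `π_*` is defined;
then `υ^* ∘ π_* ∘ tildeα^* ∘ (α^*)⁻¹ = α^* ∘ (α^*)⁻¹ = id`. A split surjective `υ^*` kills `∂` by
exactness, and `∂ = 0` in the previous degree makes the extension of supports injective.
-/

open Function

namespace AddMonoidHom

variable {M N P : Type*} [AddGroup M] [AddGroup N] [AddGroup P]

theorem eq_zero_of_exact_of_surjective {f : M →+ N} {g : N →+ P}
    (hfg : Exact f g) (hf : Surjective f) : g = 0 := by
  rw [← ker_eq_top_iff, hfg.addMonoidHom_ker_eq, range_eq_top]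
  exact hf

theorem injective_of_exact_of_eq_zero {f : M →+ N} {g : N →+ P}
    (hfg : Exact f g) (hf : f = 0) : Injective g := by
  rw [← ker_eq_bot_iff, hfg.addMonoidHom_ker_eq, hf, range_zero]

end AddMonoidHom

namespace WittBlowupSetup

variable (S : WittBlowupSetup) {L : S.PicX}

noncomputable def blowupSection (hlam : S.lam L ≡ (S.c : ℤ) - 1 [ZMOD 2]) (i : ℤ) :
    S.WU i L →+ S.WX i L :=
  (S.πPush i L).comp
    ((S.perBl i L (S.lam L) ((S.c : ℤ) - 1) hlam).toAddMonoidHom.comp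
      ((S.tildeαPull i L).comp
        (AddEquiv.ofBijective (S.αPull i L) (S.αPull_bij i L)).symm.toAddMonoidHom))

theorem res_comp_blowupSection (hlam : S.lam L ≡ (S.c : ℤ) - 1 [ZMOD 2]) (i : ℤ) :
    (S.res i L).comp (S.blowupSection hlam i) = AddMonoidHom.id (S.WU i L) := by
  rw [blowupSection, ← AddMonoidHom.comp_assoc, base_change, ← AddMonoidHom.comp_assoc,
    per_res, ← AddMonoidHom.comp_assoc, pull_comp]
  ext u
  exact (AddEquiv.ofBijective (S.αPull i L) (S.αPull_bij i L)).apply_symm_apply u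

theorem res_surjective (hlam : S.lam L ≡ (S.c : ℤ) - 1 [ZMOD 2]) (i : ℤ) :
    Surjective (S.res i L) :=
  fun u => ⟨S.blowupSection hlam i u, DFunLike.congr_fun (S.res_comp_blowupSection hlam i) u⟩

theorem conn_eq_zero (hlam : S.lam L ≡ (S.c : ℤ) - 1 [ZMOD 2]) (i : ℤ) : S.conn i L = 0 :=
  AddMonoidHom.eq_zero_of_exact_of_surjective (S.lex₂ i L) (S.res_surjective hlam i)

theorem ext_injective (hlam : S.lam L ≡ (S.c : ℤ) - 1 [ZMOD 2]) (i : ℤ) :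
    Injective (S.ext i L) := by
  obtain ⟨j, rfl⟩ : ∃ j, i = j + 1 := ⟨i - 1, by ring⟩
  exact AddMonoidHom.injective_of_exact_of_eq_zero (S.lex₃ j L) (S.conn_eq_zero hlam j)

end WittBlowupSetup

/-- **Theorem 2.2.**  If `λ(L) ≡ c − 1 mod 2`, then the restriction
`υ^* : W^*(X, L) → W^*(U, L|_U)` is split surjective with explicit section
`π_* ∘ tildeα^* ∘ (α^*)⁻¹` (composed with the square-periodicity isomorphism
`W^*(Bl, (L, λ(L))) ≅ W^*(Bl, ω_π ⊗ π^*L)`); consequently the connecting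
homomorphism `∂ : W^*(U, L|_U) → W^{*+1}_Z(X, L)` vanishes and the
localization long exact sequence reduces to split short exact sequences
`0 → W^*_Z(X, L) → W^*(X, L) → W^*(U, L|_U) → 0`. -/
theorem witt_restriction_split (S : WittBlowupSetup) (i : ℤ) (L : S.PicX)
    (hlam : S.lam L ≡ (S.c : ℤ) - 1 [ZMOD 2]) :
    (S.res i L).comp ((S.πPush i L).comp
        ((S.perBl i L (S.lam L) ((S.c : ℤ) - 1) hlam).toAddMonoidHom.comp
          ((S.tildeαPull i L).comp
            (AddEquiv.ofBijective (S.αPull i L) (S.αPull_bij i L)).symm.toAddMonoidHom)))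
      = AddMonoidHom.id (S.WU i L) ∧
    S.conn i L = 0 ∧
    Function.Injective ⇑(S.ext i L) ∧
    Function.Exact ⇑(S.ext i L) ⇑(S.res i L) ∧
    Function.Surjective ⇑(S.res i L) :=
  ⟨S.res_comp_blowupSection hlam i, S.conn_eq_zero hlam i, S.ext_injective hlam i, S.lex₁ i L,
    S.res_surjective hlam i⟩
end
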